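/- Let c = c^cr = 1/(4 log 2). There exist a constant C₀ > 0 and N₀ such that for every integer N ≥ N₀ and every vertex v ∈ V_N, |Σ_{u ∈ V_N} p(v,u) − (1 − 2c/N)| ≤ C₀/N². (In particular, in the critical case the expected degree of any vertex equals 1 − 2c/N + O(1/N²).) -/

import Mathlib

open scoped BigOperators

/-- Vertices of the discrete 2-dimensional torus. -/
abbrev Vtx (N : ℕ) : Type := ZMod N × ZMod N

/-- `ρ_N(i)`: for a residue represented in `{0,…,N−1}`, `ρ_N(i) = i` if `i ≤ N/2`
and `ρ_N(i) = N − i` otherwise. -/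
def rhoN (N : ℕ) (i : ZMod N) : ℕ :=
  if 2 * i.val ≤ N then i.val else N - i.val

/-- Torus distance `ρ(u,v) = ρ_N(u₁ − v₁) + ρ_N(u₂ − v₂)`. -/
def torusDist (N : ℕ) (u v : Vtx N) : ℕ :=
  rhoN N (u.1 - v.1) + rhoN N (u.2 - v.2)

/-- Connection probability `p(u,v) = min(c/(N·ρ(u,v)), 1)` for `u ≠ v`, `p(u,u) = 0`. -/
noncomputable def edgeProb (N : ℕ) (c : ℝ) (u v : Vtx N) : ℝ :=
  if u = v then 0 else min (c / ((N : ℝ) * (torusDist N u v : ℝ))) 1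

/-- The critical value `c^cr = 1/(4 log 2)`. -/
noncomputable def ccr : ℝ := 1 / (4 * Real.log 2)

/-!
For `c ≤ 1` the cap in `p(u,v) = min(c/(Nρ), 1)` is never active, so by translation invariance
the expected degree is `(c/N) S_N` with `S_N = Σ_{w ≠ 0} 1/ρ(w,0)`. As `x` runs over `ℤ/Nℤ`,
`ρ_N(x)` takes the value `0` once and each value in `1..⌊N/2⌋` and in `1..⌊(N-1)/2⌋` once, so
`S_N` is an explicit combination of harmonic numbers; it collapses to `4N (H_{2M} - H_M)` for
`N = 2M + 1` and to `4N (H_{2M} - H_M) - 3/N` for `N = 2M`. With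
`H_{2M} - H_M = log 2 - 1/(4M) + O(M⁻²)` this gives `S_N = 4N log 2 - 2 + O(1/N)`, and at
`c = 1/(4 log 2)` the expected degree is `1 - 2c/N + O(1/N²)`.
-/

open Finset Real

lemma harmonic_add (a q : ℕ) :
    (harmonic (a + q) : ℝ) = harmonic a + ∑ b ∈ range q, ((a + (b + 1) : ℕ) : ℝ)⁻¹ := by
  induction q with
  | zero => simp
  | succ q ih =>
    rw [← add_assoc, harmonic_succ, sum_range_succ]
    push_cast at ih ⊢
    rw [ih]
    ring

lemma sum_range_inv_succ (n : ℕ) : ∑ a ∈ range n, ((a + 1 : ℕ) : ℝ)⁻¹ = harmonic n := by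
  simpa using (harmonic_add 0 n).symm

lemma sum_range_harmonic_succ (n : ℕ) :
    ∑ a ∈ range n, (harmonic (a + 1) : ℝ) = (n + 1) * harmonic n - n := by
  induction n with
  | zero => simp
  | succ n ih =>
    rw [sum_range_succ, ih, harmonic_succ]
    push_cast
    field_simp
    ring

lemma sum_range_harmonic_add_sub (P Q : ℕ) :
    ∑ a ∈ range P, ((harmonic (a + 1 + Q) : ℝ) - harmonic (a + 1)) =
      (P + Q + 1) * harmonic (P + Q) - (P + 1) * harmonic P - (Q + 1) * harmonic Q := by
  have shift : ∑ a ∈ range P, (harmonic (a + 1 + Q) : ℝ) =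
      ∑ a ∈ range (Q + P), (harmonic (a + 1) : ℝ) - ∑ a ∈ range Q, (harmonic (a + 1) : ℝ) := by
    rw [sum_range_add, add_sub_cancel_left]
    exact sum_congr rfl fun a _ => by rw [add_right_comm, add_comm Q]
  rw [sum_sub_distrib, shift, sum_range_harmonic_succ, sum_range_harmonic_succ,
    sum_range_harmonic_succ, add_comm Q P]
  push_cast
  ring

lemma abs_inv_add_one_sub_log_add_half_le {x : ℝ} (hx : 1 ≤ x) :
    |(x + 1)⁻¹ - (log (x + 1) - log x) + ((2 * x)⁻¹ - (2 * (x + 1))⁻¹)| ≤ 2 / x ^ 3 := by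
  have hx0 : 0 < x := by linarith
  set y := (x + 1)⁻¹ with hy
  have hy0 : 0 < y := by positivity
  have h1y : 1 - y = x / (x + 1) := by rw [hy]; field_simp; ring
  have taylor : |y + y ^ 2 / 2 + (log x - log (x + 1))| ≤ 1 / (x * (x + 1) ^ 2) := by
    have hy1 : |y| < 1 := by rw [abs_of_pos hy0]; exact inv_lt_one_of_one_lt₀ (by linarith)
    have h := abs_log_sub_add_sum_range_le hy1 2
    rw [h1y, log_div hx0.ne' (by positivity), abs_of_pos hy0, h1y] at h
    convert h using 1
    · norm_num [sum_range_succ]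
    · rw [hy]; norm_num; field_simp
  have hdecomp : (x + 1)⁻¹ - (log (x + 1) - log x) + ((2 * x)⁻¹ - (2 * (x + 1))⁻¹) =
      (y + y ^ 2 / 2 + (log x - log (x + 1))) + 1 / (2 * x * (x + 1) ^ 2) := by
    rw [hy]; field_simp; ring
  have hcmp : 1 / (x * (x + 1) ^ 2) + 1 / (2 * x * (x + 1) ^ 2) ≤ 2 / x ^ 3 := by
    rw [div_add_div _ _ (by positivity) (by positivity),
      div_le_div_iff₀ (by positivity) (by positivity)]
    nlinarith [pow_pos hx0 3, pow_pos hx0 4, pow_pos hx0 5, pow_pos hx0 6]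
  rw [hdecomp]
  refine (abs_add_le _ _).trans ?_
  rw [abs_of_pos (by positivity : (0 : ℝ) < 1 / (2 * x * (x + 1) ^ 2))]
  linarith

lemma abs_harmonic_two_mul_sub_le (M : ℕ) (hM : 1 ≤ M) :
    |(harmonic (2 * M) : ℝ) - harmonic M - (log 2 - (4 * M : ℝ)⁻¹)| ≤ 2 / M ^ 2 := by
  have hM0 : (0 : ℝ) < M := by exact_mod_cast hM
  -- `F n → γ` with increments `O(n⁻³)`, and `F (2M) - F M` is the quantity to bound.
  set F : ℕ → ℝ := fun n => harmonic n - log n - (2 * n : ℝ)⁻¹ with hF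
  have htelescope :
      (harmonic (2 * M) : ℝ) - harmonic M - (log 2 - (4 * M : ℝ)⁻¹) = F (M + M) - F (M + 0) := by
    simp only [hF, add_zero, ← two_mul]
    push_cast
    rw [log_mul two_ne_zero hM0.ne']
    field_simp
    ring
  have hstep : ∀ i ∈ range M, |F (M + (i + 1)) - F (M + i)| ≤ 2 / M ^ 3 := by
    intro i _
    have hx : (1 : ℝ) ≤ M + i := by exact_mod_cast (by omega : 1 ≤ M + i)
    have hdiff : F (M + (i + 1)) - F (M + i) = ((M + i : ℝ) + 1)⁻¹ - (log ((M + i : ℝ) + 1) -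
        log (M + i : ℝ)) + ((2 * (M + i : ℝ))⁻¹ - (2 * ((M + i : ℝ) + 1))⁻¹) := by
      simp only [hF, ← add_assoc, harmonic_succ]
      push_cast
      ring
    rw [hdiff]
    refine (abs_inv_add_one_sub_log_add_half_le hx).trans ?_
    gcongr
    exact le_add_of_nonneg_right (Nat.cast_nonneg i)
  rw [htelescope, ← sum_range_sub (fun i => F (M + i))]
  calc _ ≤ ∑ i ∈ range M, |F (M + (i + 1)) - F (M + i)| := abs_sum_le_sum_abs _ _
    _ ≤ ∑ _i ∈ range M, 2 / (M : ℝ) ^ 3 := sum_le_sum hstep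
    _ = 2 / M ^ 2 := by rw [sum_const, card_range, nsmul_eq_mul]; field_simp

def foldedSum {M : Type*} [AddCommMonoid M] (P Q : ℕ) (G : ℕ → M) : M :=
  G 0 + ∑ a ∈ range P, G (a + 1) + ∑ a ∈ range Q, G (a + 1)

lemma sum_rhoN {M : Type*} [AddCommMonoid M] (N : ℕ) [NeZero N] (G : ℕ → M) :
    ∑ x : ZMod N, G (rhoN N x) = foldedSum (N / 2) ((N - 1) / 2) G := by
  have hN : N = (N / 2 + 1) + (N - 1) / 2 := by have := NeZero.pos N; omega
  have to_range : ∑ x : ZMod N, G (rhoN N x) =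
      ∑ j ∈ range N, G (if 2 * j ≤ N then j else N - j) := by
    refine sum_nbij' (fun x => x.val) (fun j => (j : ZMod N)) (fun x _ => mem_range.2 x.val_lt)
      (fun _ _ => mem_univ _) (fun x _ => ZMod.natCast_zmod_val x)
      (fun j hj => ZMod.val_cast_of_lt (mem_range.1 hj)) (fun _ _ => rfl)
  rw [to_range, hN, sum_range_add, sum_range_succ', foldedSum, ← hN]
  have lower : ∀ a ∈ range (N / 2),
      G (if 2 * (a + 1) ≤ N then a + 1 else N - (a + 1)) = G (a + 1) :=
    fun a ha => by rw [if_pos (by have := mem_range.1 ha; omega)]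
  have upper : ∀ a ∈ range ((N - 1) / 2),
      G (if 2 * (N / 2 + 1 + a) ≤ N then N / 2 + 1 + a else N - (N / 2 + 1 + a)) =
        G ((N - 1) / 2 - 1 - a + 1) :=
    fun a ha => by have := mem_range.1 ha; rw [if_neg (by omega)]; congr 1; omega
  rw [sum_congr rfl lower, sum_congr rfl upper, sum_range_reflect (fun j => G (j + 1))]
  simp only [mul_zero, zero_le, ↓reduceIte]
  abel

lemma foldedSum_inv_add (a P Q : ℕ) :
    foldedSum P Q (fun b => ((a + b : ℕ) : ℝ)⁻¹) =
      (a : ℝ)⁻¹ + (harmonic (a + P) - harmonic a) + (harmonic (a + Q) - harmonic a) := by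
  rw [foldedSum, harmonic_add a P, harmonic_add a Q, add_zero]
  ring

lemma foldedSum_foldedSum_inv_add (P Q : ℕ) :
    foldedSum P Q (fun a => foldedSum P Q (fun b => ((a + b : ℕ) : ℝ)⁻¹)) =
      (2 * P + 1) * (harmonic (2 * P) - 2 * harmonic P) +
        (2 * Q + 1) * (harmonic (2 * Q) - 2 * harmonic Q) + 2 * (P + Q + 1) * harmonic (P + Q) := by
  simp only [foldedSum_inv_add]
  rw [foldedSum]
  simp only [sum_add_distrib, sum_range_inv_succ, sum_range_harmonic_add_sub, zero_add]
  rw [add_comm Q P, two_mul P, two_mul Q, harmonic_zero]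
  push_cast
  ring

-- The term `w = 0` is `0⁻¹ = 0`.
noncomputable def invDistSum (N : ℕ) [NeZero N] : ℝ := ∑ w : Vtx N, (torusDist N w 0 : ℝ)⁻¹

lemma invDistSum_eq_foldedSum (N : ℕ) [NeZero N] :
    invDistSum N = foldedSum (N / 2) ((N - 1) / 2)
      (fun a => foldedSum (N / 2) ((N - 1) / 2) (fun b => ((a + b : ℕ) : ℝ)⁻¹)) := by
  simp only [invDistSum, torusDist, Prod.fst_zero, Prod.snd_zero, sub_zero, Fintype.sum_prod_type]
  rw [sum_congr rfl fun x _ => sum_rhoN N fun b => ((rhoN N x + b : ℕ) : ℝ)⁻¹]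
  exact sum_rhoN N (fun a => foldedSum (N / 2) ((N - 1) / 2) fun b => ((a + b : ℕ) : ℝ)⁻¹)

lemma invDistSum_two_mul_add_one (m : ℕ) :
    invDistSum (2 * m + 1) = 4 * ((2 * m + 1 : ℕ) : ℝ) * (harmonic (2 * m) - harmonic m) := by
  rw [invDistSum_eq_foldedSum, show (2 * m + 1) / 2 = m by omega,
    show (2 * m + 1 - 1) / 2 = m by omega, foldedSum_foldedSum_inv_add, show m + m = 2 * m by ring]
  push_cast
  ring

lemma invDistSum_two_mul_add_two (m : ℕ) :
    invDistSum (2 * m + 2) = 4 * ((2 * m + 2 : ℕ) : ℝ) *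
      (harmonic (2 * (m + 1)) - harmonic (m + 1)) - 3 / ((2 * m + 2 : ℕ) : ℝ) := by
  rw [invDistSum_eq_foldedSum, show (2 * m + 2) / 2 = m + 1 by omega,
    show (2 * m + 2 - 1) / 2 = m by omega, foldedSum_foldedSum_inv_add,
    show 2 * (m + 1) = 2 * m + 1 + 1 by ring, show m + 1 + m = 2 * m + 1 by ring]
  simp only [harmonic_succ]
  push_cast
  field_simp
  ring

lemma abs_four_mul_harmonic_sub_le {N M : ℕ} {r : ℝ} (hM : 1 ≤ M) (hMN : 2 * M ≤ N)
    (hNM : N ≤ 2 * M + 1) (hr0 : 0 ≤ r) (hr : r ≤ 3 / N) :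
    |4 * N * ((harmonic (2 * M) : ℝ) - harmonic M) - r - (4 * N * log 2 - 2)| ≤ 80 / N := by
  have hM1 : (1 : ℝ) ≤ M := by exact_mod_cast hM
  have hMN' : (2 * M : ℝ) ≤ N := by exact_mod_cast hMN
  have hNM' : (N : ℝ) ≤ 2 * M + 1 := by exact_mod_cast hNM
  have hN0 : (0 : ℝ) < N := by linarith
  have hEle := abs_harmonic_two_mul_sub_le M hM
  set E := (harmonic (2 * M) : ℝ) - harmonic M - (log 2 - (4 * M : ℝ)⁻¹) with hE
  have hsplit : 4 * N * ((harmonic (2 * M) : ℝ) - harmonic M) - r - (4 * N * log 2 - 2) =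
      4 * N * E - ((N - 2 * M) / M + r) := by
    rw [hE]
    field_simp
    ring
  have hfrac : 0 ≤ (N - 2 * M) / (M : ℝ) := div_nonneg (by linarith) (by linarith)
  have hmain : 4 * N * |E| ≤ 72 / N := by
    refine (mul_le_mul_of_nonneg_left hEle (by positivity)).trans ?_
    rw [mul_div_assoc', div_le_div_iff₀ (by positivity) hN0]
    nlinarith
  have hlin : (N - 2 * M) / (M : ℝ) ≤ 3 / N := by
    rw [div_le_div_iff₀ (by positivity) hN0]
    nlinarith
  calc _ = |4 * N * E - ((N - 2 * M) / M + r)| := by rw [hsplit]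
    _ ≤ 4 * N * |E| + ((N - 2 * M) / M + r) := by
      refine (abs_sub _ _).trans ?_
      rw [abs_mul, abs_of_pos (by positivity), abs_of_nonneg (add_nonneg hfrac hr0)]
    _ ≤ 72 / N + (3 / N + 3 / N) := by gcongr
    _ ≤ 80 / N := by rw [← add_div, ← add_div]; gcongr; norm_num

lemma abs_invDistSum_sub_le (N : ℕ) [NeZero N] (hN : 2 ≤ N) :
    |invDistSum N - (4 * N * log 2 - 2)| ≤ 80 / N := by
  rcases Nat.even_or_odd' N with ⟨m, hm | rfl⟩
  · obtain ⟨k, rfl⟩ : ∃ k, N = 2 * k + 2 := ⟨m - 1, by omega⟩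
    rw [invDistSum_two_mul_add_two]
    exact abs_four_mul_harmonic_sub_le (by omega) (by omega) (by omega) (by positivity) le_rfl
  · have := abs_four_mul_harmonic_sub_le (N := 2 * m + 1) (M := m) (r := 0) (by omega) (by omega)
      (by omega) le_rfl (by positivity)
    rwa [sub_zero, ← invDistSum_two_mul_add_one] at this

lemma torusDist_sub_left (N : ℕ) (v w : Vtx N) : torusDist N v (v - w) = torusDist N w 0 := by
  simp [torusDist]

lemma edgeProb_eq_mul_inv (N : ℕ) {c : ℝ} (hc0 : 0 ≤ c) (hc1 : c ≤ 1) (u v : Vtx N) :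
    edgeProb N c u v = c / N * (torusDist N u v : ℝ)⁻¹ := by
  rw [edgeProb]
  split_ifs with huv
  · simp [huv, torusDist, rhoN]
  · have hle : c / ((N : ℝ) * torusDist N u v) ≤ 1 := by
      rw [← Nat.cast_mul]
      rcases (N * torusDist N u v).eq_zero_or_pos with h0 | hpos
      · simp [h0]
      · exact (div_le_self hc0 (by exact_mod_cast hpos)).trans hc1
    rw [min_eq_left hle, div_mul_eq_div_div, div_eq_mul_inv]

lemma sum_edgeProb_eq (N : ℕ) [NeZero N] {c : ℝ} (hc0 : 0 ≤ c) (hc1 : c ≤ 1) (v : Vtx N) :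
    ∑ u : Vtx N, edgeProb N c v u = c / N * invDistSum N := by
  simp only [edgeProb_eq_mul_inv N hc0 hc1, ← mul_sum, invDistSum]
  congr 1
  exact (Fintype.sum_equiv (Equiv.subLeft v) _ _ fun w => by rw [Equiv.subLeft_apply,
    torusDist_sub_left]).symm

lemma ccr_mul_four_log_two : ccr * (4 * log 2) = 1 := by
  rw [ccr, one_div, inv_mul_cancel₀ (by positivity)]

lemma ccr_pos : 0 < ccr := by
  rw [ccr]
  positivity

lemma ccr_le_one : ccr ≤ 1 := by
  rw [ccr, div_le_one (by positivity)]
  linarith [log_two_gt_d9]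

/-- For the critical `c = 1/(4 log 2)` there are `C₀ > 0` and `N₀` such that for every
`N ≥ N₀` and every vertex `v`, `|Σ_u p(v,u) − (1 − 2c/N)| ≤ C₀/N²`. -/
theorem stmt4 :
    ∃ C₀ : ℝ, 0 < C₀ ∧ ∃ N₀ : ℕ, ∀ (N : ℕ) [NeZero N], N₀ ≤ N →
      ∀ v : Vtx N,
        |(∑ u : Vtx N, edgeProb N ccr v u) - (1 - 2 * ccr / (N : ℝ))| ≤
          C₀ / (N : ℝ) ^ 2 := by
  refine ⟨80, by norm_num, 2, fun N _ hN v => ?_⟩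
  have hN0 : (0 : ℝ) < N := by exact_mod_cast NeZero.pos N
  have hcenter : 1 - 2 * ccr / N = ccr / N * (4 * N * log 2 - 2) := by
    rw [← ccr_mul_four_log_two]
    field_simp
  rw [sum_edgeProb_eq N ccr_pos.le ccr_le_one, hcenter, ← mul_sub, abs_mul,
    abs_of_pos (div_pos ccr_pos hN0)]
  calc ccr / N * |invDistSum N - (4 * N * log 2 - 2)| ≤ 1 / N * (80 / N) :=
        mul_le_mul (div_le_div_of_nonneg_right ccr_le_one hN0.le) (abs_invDistSum_sub_le N hN)
          (abs_nonneg _) (by positivity)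
    _ = 80 / N ^ 2 := by ring
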